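/- If the Chowla–Walum conjecture holds for (α, j) = (1, 1), i.e., Σ_{d ≤ √x} d·ψ(x/d) ≪_ε x^{3/4+ε} for all ε > 0, then for x → ∞ and all ε ∈ (0,1/2]: Σ_{n ≤ x} σ̃_1(n) = (2/3) x^{3/2} - (1/4) x + O(x^{3/4 + ε}), where σ̃_1(n) = Σ_{d ∣ n, d² ≤ n} d. -/

import Mathlib

/-!
Writing `n = d * m` with `d ≤ m` gives `∑_{n ≤ x} σ̃₁(n) = ∑_{d ≤ √x} d (⌊x/d⌋ - d + 1)`.
Substituting `⌊x/d⌋ = x/d - ψ(x/d) - 1/2` turns this into a polynomial in `N = ⌊√x⌋` and `x`,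
minus the Chowla–Walum sum `∑_{d ≤ √x} d ψ(x/d)`; with `√x = N + θ`, `0 ≤ θ < 1`, the polynomial
is `(2/3) x^{3/2} - x/4 + N (1/12 + θ/2 - θ²) + θ²/4 - 2θ³/3 = (2/3) x^{3/2} - x/4 + O(√x)`.
-/

open Filter

noncomputable def psi (t : ℝ) : ℝ := t - (⌊t⌋ : ℝ) - 1 / 2

open Finset

theorem natCast_floor_eq_sub_psi {t : ℝ} (ht : 0 ≤ t) : (⌊t⌋₊ : ℝ) = t - psi t - 1 / 2 := by
  rw [psi, ← Int.natCast_floor_eq_floor ht]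
  push_cast
  ring

theorem card_filter_dvd_sq_le (K : ℕ) {d : ℕ} (hd : 0 < d) :
    #{n ∈ Icc 1 K | d ∣ n ∧ d ^ 2 ≤ n} = #(Icc d (K / d)) := by
  refine card_nbij' (· / d) (d * ·) ?_ ?_ ?_ ?_
  · intro n hn
    simp only [coe_filter, coe_Icc, mem_Icc, Set.mem_ofPred_eq, Set.mem_Icc] at hn ⊢
    obtain ⟨⟨-, hnK⟩, ⟨m, rfl⟩, hdm⟩ := hn
    rw [Nat.mul_div_cancel_left m hd]
    exact ⟨by nlinarith, Nat.le_div_iff_mul_le hd |>.2 (by linarith)⟩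
  · intro m hm
    simp only [coe_filter, coe_Icc, mem_Icc, Set.mem_ofPred_eq, Set.mem_Icc] at hm ⊢
    have hdm : d * m ≤ K := mul_comm d m ▸ (Nat.le_div_iff_mul_le hd).1 hm.2
    exact ⟨⟨by nlinarith, hdm⟩, dvd_mul_right d m, by nlinarith⟩
  · intro n hn
    simp only [coe_filter, Set.mem_ofPred_eq] at hn
    exact Nat.mul_div_cancel' hn.2.1
  · intro m _
    exact Nat.mul_div_cancel_left m hd

theorem sum_sum_divisors_filter_sq_le {M : Type*} [AddCommMonoid M] (K : ℕ) (f : ℕ → M) :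
    ∑ n ∈ Icc 1 K, ∑ d ∈ n.divisors with d ^ 2 ≤ n, f d =
      ∑ d ∈ Icc 1 K.sqrt, #(Icc d (K / d)) • f d := by
  rw [sum_comm' (t' := Icc 1 K.sqrt) (s' := fun d => {n ∈ Icc 1 K | d ∣ n ∧ d ^ 2 ≤ n})]
  · refine sum_congr rfl fun d hd => ?_
    rw [sum_const, card_filter_dvd_sq_le K (mem_Icc.1 hd).1]
  · intro n d
    simp only [mem_Icc, mem_filter, Nat.mem_divisors, Nat.le_sqrt']
    constructor
    · rintro ⟨⟨hn, hnK⟩, ⟨hdn, -⟩, hdsq⟩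
      have := Nat.pos_of_dvd_of_pos hdn hn
      exact ⟨⟨⟨hn, hnK⟩, hdn, hdsq⟩, this, hdsq.trans hnK⟩
    · rintro ⟨⟨⟨hn, hnK⟩, hdn, hdsq⟩, -⟩
      exact ⟨⟨hn, hnK⟩, ⟨hdn, by omega⟩, hdsq⟩

theorem floor_sqrt_eq_sqrt_floor {x : ℝ} (hx : 0 ≤ x) : ⌊√x⌋₊ = ⌊x⌋₊.sqrt :=
  eq_of_forall_le_iff fun d => by
    rw [Nat.le_floor_iff (Real.sqrt_nonneg x), Real.le_sqrt (Nat.cast_nonneg d) hx, Nat.le_sqrt',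
      Nat.le_floor_iff hx, Nat.cast_pow]

noncomputable def mainTerm (N : ℕ) (x : ℝ) : ℝ := N * x + N * (N + 1) / 4 - N * (N + 1) * (2 * N + 1) / 6

theorem sum_Icc_add_half_sub_sq (N : ℕ) (x : ℝ) :
    ∑ d ∈ Icc 1 N, (x + d / 2 - d ^ 2 : ℝ) = mainTerm N x := by
  induction N with
  | zero => simp [mainTerm]
  | succ N ih =>
    rw [sum_Icc_succ_top (by omega), ih, mainTerm, mainTerm]
    push_cast
    ring

theorem card_Icc_floor_div_smul {x : ℝ} (hx : 0 ≤ x) {d : ℕ} (hd : 0 < d)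
    (hdx : d ≤ ⌊x⌋₊ / d + 1) :
    #(Icc d (⌊x⌋₊ / d)) • (d : ℝ) = x + d / 2 - d ^ 2 - d * psi (x / d) := by
  rw [Nat.card_Icc, nsmul_eq_mul, Nat.cast_sub hdx, ← Nat.floor_div_natCast, Nat.cast_add,
    natCast_floor_eq_sub_psi (by positivity)]
  field_simp
  ring

theorem sum_sum_divisors_filter_sq_le_eq_mainTerm_sub {x : ℝ} (hx : 0 ≤ x) :
    ∑ n ∈ Icc 1 ⌊x⌋₊, ∑ d ∈ n.divisors with d ^ 2 ≤ n, (d : ℝ) =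
      mainTerm ⌊√x⌋₊ x - ∑ d ∈ Icc 1 ⌊√x⌋₊, d * psi (x / d) := by
  rw [sum_sum_divisors_filter_sq_le, ← sum_Icc_add_half_sub_sq, ← sum_sub_distrib,
    floor_sqrt_eq_sqrt_floor hx]
  refine sum_congr rfl fun d hd => ?_
  obtain ⟨hd, hdK⟩ := mem_Icc.1 hd
  have : d ≤ ⌊x⌋₊ / d := (Nat.le_div_iff_mul_le hd).2 (Nat.le_sqrt.1 hdK)
  exact card_Icc_floor_div_smul hx hd (by omega)

theorem abs_mainTerm_sub_le {N : ℕ} {u : ℝ} (hNu : N ≤ u) (huN : u < N + 1) :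
    |mainTerm N (u ^ 2) - (2 / 3 * u ^ 3 - 1 / 4 * u ^ 2)| ≤ 2 * u := by
  obtain ⟨θ, hθ0, hθ1, rfl⟩ : ∃ θ : ℝ, 0 ≤ θ ∧ θ < 1 ∧ u = N + θ :=
    ⟨u - N, by linarith, by linarith, by ring⟩
  have hN : (0 : ℝ) ≤ N := N.cast_nonneg
  have hexpand : mainTerm N ((N + θ) ^ 2) - (2 / 3 * (N + θ) ^ 3 - 1 / 4 * (N + θ) ^ 2) =
      N * (1 / 12 + θ / 2 - θ ^ 2) + θ ^ 2 / 4 - 2 * θ ^ 3 / 3 := by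
    rw [mainTerm]
    ring
  rw [hexpand, abs_le]
  constructor <;> nlinarith [mul_nonneg hN hθ0, mul_nonneg hN (mul_nonneg hθ0 hθ0),
    mul_nonneg hθ0 hθ0, mul_nonneg (mul_nonneg hθ0 hθ0) hθ0, mul_nonneg hN (sub_nonneg.2 hθ1.le)]

theorem mainTerm_sub_isBigO {a : ℝ} (ha : 1 / 2 ≤ a) :
    (fun x : ℝ => mainTerm ⌊√x⌋₊ x - (2 / 3 * x ^ ((3 : ℝ) / 2) - 1 / 4 * x)) =O[atTop]
      fun x => x ^ a := by
  refine Asymptotics.IsBigO.of_bound 2 ?_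
  filter_upwards [eventually_ge_atTop 1] with x hx
  have hx0 : 0 ≤ x := by linarith
  have h32 : x ^ ((3 : ℝ) / 2) = √x ^ 3 := by
    rw [Real.rpow_div_two_eq_sqrt _ hx0]
    norm_cast
  calc ‖mainTerm ⌊√x⌋₊ x - (2 / 3 * x ^ ((3 : ℝ) / 2) - 1 / 4 * x)‖
      = |mainTerm ⌊√x⌋₊ (√x ^ 2) - (2 / 3 * √x ^ 3 - 1 / 4 * √x ^ 2)| := by
        rw [Real.sq_sqrt hx0, h32, Real.norm_eq_abs]
    _ ≤ 2 * √x := abs_mainTerm_sub_le (Nat.floor_le (Real.sqrt_nonneg x)) (Nat.lt_floor_add_one _)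
    _ = 2 * x ^ (1 / 2 : ℝ) := by rw [Real.sqrt_eq_rpow]
    _ ≤ 2 * x ^ a := by gcongr
    _ = 2 * ‖x ^ a‖ := by rw [Real.norm_of_nonneg (by positivity)]

theorem stmt_17
    (h : ∀ ε : ℝ, 0 < ε →
      (fun x : ℝ =>
          ∑ d ∈ Finset.Icc 1 ⌊Real.sqrt x⌋₊, (d : ℝ) * psi (x / (d : ℝ))) =O[atTop]
        fun x : ℝ => x ^ ((3 : ℝ) / 4 + ε)) :
    ∀ ε : ℝ, 0 < ε → ε ≤ 1 / 2 →
      (fun x : ℝ =>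
          (∑ n ∈ Finset.Icc 1 ⌊x⌋₊,
              ∑ d ∈ n.divisors.filter (fun d => d ^ 2 ≤ n), (d : ℝ)) -
            ((2 / 3) * x ^ ((3 : ℝ) / 2) - (1 / 4) * x)) =O[atTop]
        fun x : ℝ => x ^ ((3 : ℝ) / 4 + ε) := by
  intro ε hε _
  refine ((mainTerm_sub_isBigO (by linarith)).sub (h ε hε)).congr' ?_ EventuallyEq.rfl
  filter_upwards [eventually_ge_atTop 0] with x hx
  rw [sum_sum_divisors_filter_sq_le_eq_mainTerm_sub hx]
  ring
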